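/- arXiv:1811.02150 — 2 statements merged into one kernel-verified Lean document; each statement's English description precedes it below -/
import Mathlib

section
/- Let 0 < β < δ be real numbers, set a = 1/(2δ) and b = 1/(β + δ) (so that 0 < a < b). Let g₁ : ℝ → ℝ be a continuous nonnegative function with support contained in the open interval (a, b) and ∫_ℝ g₁(r) dr = 1, and define g₂ : ℝ → ℝ by g₂(t) = ∫₀ᵗ (∫₀ˢ g₁(r) dr) ds. Then for every t with −β ≤ t < δ one has g₂(1/(δ − t)) = t/(δ(δ − t)) + g₂(1/δ). -/
open intervalIntegral MeasureTheory Set Function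

/-- On `[b, ∞)` the primitive of `f` is the constant `∫ f`. -/
theorem integral_primitive_sub_of_support_subset {E : Type*} [NormedAddCommGroup E]
    [NormedSpace ℝ E] [CompleteSpace E] {f : ℝ → E} (hf : Integrable f) {b x y : ℝ}
    (hsupp : support f ⊆ Ioc 0 b) (hx : b ≤ x) (hy : b ≤ y) :
    (∫ s in (0:ℝ)..x, ∫ r in (0:ℝ)..s, f r) - ∫ s in (0:ℝ)..y, ∫ r in (0:ℝ)..s, f r =
      (x - y) • ∫ r, f r := by
  have hprim : Continuous fun s => ∫ r in (0:ℝ)..s, f r :=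
    continuous_primitive (fun _ _ => hf.intervalIntegrable) 0
  have hconst : ∀ s ∈ uIcc y x, ∫ r in (0:ℝ)..s, f r = ∫ r, f r := fun s hs =>
    integral_eq_integral_of_support_subset
      (hsupp.trans (Ioc_subset_Ioc_right ((le_min hy hx).trans hs.1)))
  rw [integral_interval_sub_left (hprim.intervalIntegrable _ _) (hprim.intervalIntegrable _ _),
    integral_congr hconst, intervalIntegral.integral_const]

theorem iterated_integral_boundary_identity_general
    (β δ : ℝ) (hβ : 0 < β) (hβδ : β < δ)
    (g₁ : ℝ → ℝ)
    (hsupp : Function.support g₁ ⊆ Set.Ioo (1 / (2 * δ)) (1 / (β + δ)))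
    (htotal : ∫ r, g₁ r = 1)
    (g₂ : ℝ → ℝ) (hg₂ : ∀ t, g₂ t = ∫ s in (0:ℝ)..t, ∫ r in (0:ℝ)..s, g₁ r) :
    ∀ t, -β ≤ t → t < δ →
      g₂ (1 / (δ - t)) = t / (δ * (δ - t)) + g₂ (1 / δ) := by
  intro t hβt htδ
  have hδ : 0 < δ := hβ.trans hβδ
  -- a non-integrable function has Bochner integral `0`
  have hg₁ : Integrable g₁ := .of_integral_ne_zero (htotal ▸ one_ne_zero)
  have hsupp_Ioc : support g₁ ⊆ Ioc 0 (1 / (β + δ)) :=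
    hsupp.trans (Ioo_subset_Ioc_self.trans (Ioc_subset_Ioc_left (by positivity)))
  have hδt : 0 < δ - t := by linarith
  have hx : 1 / (β + δ) ≤ 1 / (δ - t) := one_div_le_one_div_of_le hδt (by linarith)
  have hy : 1 / (β + δ) ≤ 1 / δ := one_div_le_one_div_of_le hδ (by linarith)
  have hlinear := integral_primitive_sub_of_support_subset hg₁ hsupp_Ioc hx hy
  rw [← hg₂, ← hg₂, htotal, smul_eq_mul, mul_one, sub_eq_iff_eq_add] at hlinear
  rw [hlinear]
  congr 1
  field_simp
  ring

/-- With `0 < β < δ`, `a = 1/(2δ)`, `b = 1/(β + δ)`, `g₁` continuous nonnegative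
supported in `(a, b)` with total integral 1, and `g₂` its twice-iterated integral,
one has `g₂(1/(δ − t)) = t/(δ(δ − t)) + g₂(1/δ)` for all `t ∈ [−β, δ)`. -/
theorem iterated_integral_boundary_identity
    (β δ : ℝ) (hβ : 0 < β) (hβδ : β < δ)
    (g₁ : ℝ → ℝ) (hcont : Continuous g₁) (hnonneg : ∀ r, 0 ≤ g₁ r)
    (hsupp : Function.support g₁ ⊆ Set.Ioo (1 / (2 * δ)) (1 / (β + δ)))
    (htotal : ∫ r, g₁ r = 1)
    (g₂ : ℝ → ℝ) (hg₂ : ∀ t, g₂ t = ∫ s in (0:ℝ)..t, ∫ r in (0:ℝ)..s, g₁ r) :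
    ∀ t, -β ≤ t → t < δ →
      g₂ (1 / (δ - t)) = t / (δ * (δ - t)) + g₂ (1 / δ) :=
  iterated_integral_boundary_identity_general β δ hβ hβδ g₁ hsupp htotal g₂ hg₂
end

section
/- Let 0 < β < δ be real numbers, set a = 1/(2δ) and b = 1/(β + δ) (so that 0 < a < b). Let g₁ : ℝ → ℝ be a continuous nonnegative function with support contained in the open interval (a, b) and ∫_ℝ g₁(r) dr = 1, and define g₂ : ℝ → ℝ by g₂(t) = ∫₀ᵗ (∫₀ˢ g₁(r) dr) ds. Then for every t with −β ≤ t < δ one has g₂(1/(δ − t)) > 0. -/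
open intervalIntegral MeasureTheory

/-! The support condition puts `supp g₁` inside `(0, b]`, so the primitive `F x = ∫₀ˣ g₁`
takes the value `∫ g₁ = 1` at `b`. Since `1/(δ − t) ≥ b`, the value `g₂(1/(δ − t))` is the
integral over `[0, 1/(δ − t)]` of the continuous nonnegative `F`, which is positive at `b`. -/

theorem integral_primitive_pos_of_pos_at {g : ℝ → ℝ}
    (hg : ∀ u v, IntervalIntegrable g volume u v) (hg_nonneg : ∀ r, 0 ≤ g r) {b x : ℝ}
    (hb : 0 < b) (hbx : b ≤ x) (hgb : 0 < ∫ r in (0:ℝ)..b, g r) :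
    0 < ∫ s in (0:ℝ)..x, ∫ r in (0:ℝ)..s, g r :=
  integral_pos (hb.trans_le hbx) (continuous_primitive hg 0).continuousOn
    (fun _ hs ↦ integral_nonneg hs.1.le fun r _ ↦ hg_nonneg r) ⟨b, ⟨hb.le, hbx⟩, hgb⟩

theorem iterated_integral_boundary_pos_general
    (β δ : ℝ) (hβδ : β < δ)
    (g₁ : ℝ → ℝ) (hcont : Continuous g₁) (hnonneg : ∀ r, 0 ≤ g₁ r)
    (hsupp : Function.support g₁ ⊆ Set.Ioo (1 / (2 * δ)) (1 / (β + δ)))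
    (htotal : ∫ r, g₁ r = 1)
    (g₂ : ℝ → ℝ) (hg₂ : ∀ t, g₂ t = ∫ s in (0:ℝ)..t, ∫ r in (0:ℝ)..s, g₁ r) :
    ∀ t, -β ≤ t → t < δ → 0 < g₂ (1 / (δ - t)) := by
  intro t ht htδ
  have hδ : 0 < δ := by linarith
  have hb : 0 < 1 / (β + δ) := one_div_pos.2 (by linarith)
  have hbx : 1 / (β + δ) ≤ 1 / (δ - t) := one_div_le_one_div_of_le (by linarith) (by linarith)
  have hsupp' : Function.support g₁ ⊆ Set.Ioc 0 (1 / (β + δ)) :=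
    hsupp.trans (Set.Ioo_subset_Ioc_self.trans (Set.Ioc_subset_Ioc_left (by positivity)))
  rw [hg₂]
  refine integral_primitive_pos_of_pos_at (fun u v ↦ hcont.intervalIntegrable u v) hnonneg hb hbx ?_
  rw [integral_eq_integral_of_support_subset hsupp', htotal]
  exact one_pos

/-- With `0 < β < δ`, `a = 1/(2δ)`, `b = 1/(β + δ)`, `g₁` continuous nonnegative
supported in `(a, b)` with total integral 1, and `g₂` its twice-iterated integral,
one has `g₂(1/(δ − t)) > 0` for all `t ∈ [−β, δ)`. -/
theorem iterated_integral_boundary_pos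
    (β δ : ℝ) (hβ : 0 < β) (hβδ : β < δ)
    (g₁ : ℝ → ℝ) (hcont : Continuous g₁) (hnonneg : ∀ r, 0 ≤ g₁ r)
    (hsupp : Function.support g₁ ⊆ Set.Ioo (1 / (2 * δ)) (1 / (β + δ)))
    (htotal : ∫ r, g₁ r = 1)
    (g₂ : ℝ → ℝ) (hg₂ : ∀ t, g₂ t = ∫ s in (0:ℝ)..t, ∫ r in (0:ℝ)..s, g₁ r) :
    ∀ t, -β ≤ t → t < δ → 0 < g₂ (1 / (δ - t)) :=
  iterated_integral_boundary_pos_general β δ hβδ g₁ hcont hnonneg hsupp htotal g₂ hg₂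
end
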